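/- Let U and D be disjoint subsets of [2, n−1] and π ∈ S_n. Then π possesses a single reduced word simultaneously accepted by all automata U(j) for j ∈ U and D(j) for j ∈ D if and only if π avoids the patterns jki for all j ∈ U and kij for all j ∈ D (with i < j < k). -/

import Mathlib

/-- The permutation of `ℕ` given by a word in the adjacent transpositions. -/
def wordProd (L : List ℕ) : Equiv.Perm ℕ :=
  (L.map (fun m => Equiv.swap m (m + 1))).prod

/-- `L` is a reduced word of `π ∈ S_n`. -/
def IsRWord (n : ℕ) (π : Equiv.Perm ℕ) (L : List ℕ) : Prop :=
  (∀ m ∈ L, m ∈ Finset.Icc 1 (n - 1)) ∧ wordProd L = π ∧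
    ∀ L' : List ℕ, (∀ m ∈ L', m ∈ Finset.Icc 1 (n - 1)) → wordProd L' = π →
      L.length ≤ L'.length

/-- States of the permutree-sorting automata. -/
inductive AState : Type
  | healthy (m : ℕ) : AState
  | ill (m : ℕ) : AState
  | dead : AState
deriving DecidableEq

/-- Transition function of the automaton `𝕌(j)`. -/
def Ustep : AState → ℕ → AState
  | .healthy m, x =>
      if x = m then .healthy (m + 1) else if x + 1 = m then .ill m else .healthy m
  | .ill m, x => if x = m then .dead else .ill m
  | .dead, _ => .dead

/-- The state reached by `𝕌(j)` after reading `L`, starting at the healthy state `j`. -/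
def Urun (j : ℕ) (L : List ℕ) : AState := L.foldl Ustep (.healthy j)

/-- Transition function of the mirror automaton `𝔻(j)`: at the healthy state `m`,
reading `s_{m-1}` advances to the healthy state `m-1`, reading `s_m` moves to the ill
state `m`, from which reading `s_{m-1}` leads to the dead state; other letters loop. -/
def Dstep : AState → ℕ → AState
  | .healthy m, x =>
      if x + 1 = m then .healthy x else if x = m then .ill m else .healthy m
  | .ill m, x => if x + 1 = m then .dead else .ill m
  | .dead, _ => .dead

/-- The state reached by `𝔻(j)` after reading `L`, starting at the healthy state `j`. -/
def Drun (j : ℕ) (L : List ℕ) : AState := L.foldl Dstep (.healthy j)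

/-!
Reading a word `s_{i₁} ⋯ s_{i_k}` from the left swaps adjacent values of the permutation that
remains to be sorted, so a word is reduced exactly when each letter `s_i` is a left descent
(`π⁻¹ (i + 1) < π⁻¹ i`) of what remains, and its length is then the number of inversions.
To each automaton state we attach an invariant of the remaining permutation (`UViable`,
`DViable`): a healthy state `j` asks for avoidance of the pattern with pivot `j`, an ill state,
which forbids one letter forever, asks that an initial segment be stabilised. Along any descent
these invariants pull back, which gives soundness. For completeness one needs a descent compatible
with all automata at once: the greatest descent is one unless some `𝔻(j)` blocks it, and the
greatest descent below a blocked `𝔻`-pivot cannot be blocked by a `𝕌`-automaton, since that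
would produce a `kij` pattern; descending through blocked `𝔻`-pivots thus ends at a compatible
descent.
-/

open Equiv Set

def adjSwap (i : ℕ) : Perm ℕ := swap i (i + 1)

lemma adjSwap_apply (i x : ℕ) :
    adjSwap i x = if x = i then i + 1 else if x = i + 1 then i else x := by
  simp only [adjSwap, swap_apply_def]

@[simp]
lemma adjSwap_apply_left (i : ℕ) : adjSwap i i = i + 1 := swap_apply_left _ _

@[simp]
lemma adjSwap_apply_right (i : ℕ) : adjSwap i (i + 1) = i := swap_apply_right _ _

lemma adjSwap_mul_adjSwap_mul (i : ℕ) (π : Perm ℕ) : adjSwap i * (adjSwap i * π) = π := by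
  rw [← mul_assoc, adjSwap, swap_mul_self, one_mul]

lemma inv_adjSwap_mul_apply (i x : ℕ) (π : Perm ℕ) :
    (adjSwap i * π)⁻¹ x = π⁻¹ (adjSwap i x) := by
  rw [mul_inv_rev, adjSwap, swap_inv, Perm.mul_apply]

lemma wordProd_cons (i : ℕ) (L : List ℕ) : wordProd (i :: L) = adjSwap i * wordProd L := by
  simp [wordProd, adjSwap]

lemma adjSwap_lt_adjSwap_iff {i x y : ℕ} :
    adjSwap i y < adjSwap i x ↔ y < x ∧ ¬(y = i ∧ x = i + 1) ∨ y = i + 1 ∧ x = i := by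
  simp only [adjSwap_apply]
  split_ifs <;> omega

lemma adjSwap_apply_lt_iff {i m x : ℕ} (h : i + 1 ≠ m) : adjSwap i x < m ↔ x < m := by
  rw [adjSwap_apply]; split_ifs <;> omega

lemma lt_adjSwap_apply_iff {i m x : ℕ} (h : i ≠ m) : m < adjSwap i x ↔ m < x := by
  rw [adjSwap_apply]; split_ifs <;> omega

lemma adjSwap_apply_eq_iff {i m x : ℕ} (h₁ : i ≠ m) (h₂ : i + 1 ≠ m) :
    adjSwap i x = m ↔ x = m := by
  rw [adjSwap_apply]; split_ifs <;> omega

def SupportedIn (n : ℕ) (π : Perm ℕ) : Prop := ∀ x, x ∉ Finset.Icc 1 n → π x = x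

namespace SupportedIn

variable {n i : ℕ} {π : Perm ℕ}

lemma mem_of_apply_ne (hπ : SupportedIn n π) {x : ℕ} (h : π x ≠ x) : 1 ≤ x ∧ x ≤ n := by
  by_contra hx
  exact h (hπ x (by simpa using hx))

lemma apply_mem (hπ : SupportedIn n π) {x : ℕ} (h₁ : 1 ≤ x) (h₂ : x ≤ n) :
    1 ≤ π x ∧ π x ≤ n := by
  by_contra hx
  have hfix : π (π x) = π x := hπ _ (by simpa using hx)
  rw [π.injective hfix] at hx
  exact hx ⟨h₁, h₂⟩

lemma inv (hπ : SupportedIn n π) : SupportedIn n π⁻¹ := fun x hx => by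
  rw [Perm.inv_eq_iff_eq, hπ x hx]

lemma adjSwap_mul (hπ : SupportedIn n π) (h₁ : 1 ≤ i) (h₂ : i + 1 ≤ n) :
    SupportedIn n (adjSwap i * π) := fun x hx => by
  simp only [Finset.mem_Icc] at hx
  rw [Perm.mul_apply, hπ x (by simpa using hx), adjSwap_apply]
  split_ifs <;> omega

lemma descent_bounds (hπ : SupportedIn n π) (hd : π⁻¹ (i + 1) < π⁻¹ i) : 1 ≤ i ∧ i + 1 ≤ n := by
  have h₀ : π⁻¹ 0 = 0 := hπ.inv 0 (by simp)
  refine ⟨Nat.one_le_iff_ne_zero.2 fun hi => by subst hi; omega, not_lt.1 fun hn => ?_⟩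
  have h₁ : π⁻¹ (i + 1) = i + 1 := hπ.inv _ (by simp; omega)
  obtain ⟨hi₁, hin⟩ := hπ.inv.mem_of_apply_ne (x := i) (by omega)
  have := (hπ.inv.apply_mem hi₁ hin).2
  omega

end SupportedIn

lemma supportedIn_wordProd {n : ℕ} {L : List ℕ} (hL : ∀ m ∈ L, m ∈ Finset.Icc 1 (n - 1)) :
    SupportedIn n (wordProd L) := by
  induction L with
  | nil => exact fun _ _ => rfl
  | cons i L ih =>
    rw [List.forall_mem_cons, Finset.mem_Icc] at hL
    rw [wordProd_cons]
    exact (ih hL.2).adjSwap_mul hL.1.1 (by omega)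

lemma exists_descent_of_ne_one {π : Perm ℕ} (h : π ≠ 1) : ∃ i, π⁻¹ (i + 1) < π⁻¹ i := by
  by_contra! hmono
  have hinv : StrictMono ⇑π⁻¹ := strictMono_nat_of_lt_succ fun i =>
    (hmono i).lt_of_ne (π⁻¹.injective.ne (by omega))
  have hπ : StrictMono ⇑π := fun x y hxy => hinv.lt_iff_lt.1 (by simpa using hxy)
  exact h (Perm.ext fun x => le_antisymm (by simpa using hinv.id_le (π x)) (hπ.id_le x))

lemma exists_descent_of_inv_apply_lt {π : Perm ℕ} {v w : ℕ} (hvw : v ≤ w)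
    (h : π⁻¹ w < π⁻¹ v) : ∃ t, v ≤ t ∧ t < w ∧ π⁻¹ (t + 1) < π⁻¹ t := by
  induction w, hvw using Nat.le_induction with
  | base => exact absurd h (lt_irrefl _)
  | succ w hvw ih =>
    by_cases hw : π⁻¹ (w + 1) < π⁻¹ w
    · exact ⟨w, hvw, by omega, hw⟩
    · obtain ⟨t, ht₁, ht₂, ht⟩ := ih (by omega)
      exact ⟨t, ht₁, by omega, ht⟩

def invSet (n : ℕ) (π : Perm ℕ) : Finset (ℕ × ℕ) :=
  (Finset.Icc 1 n ×ˢ Finset.Icc 1 n).filter fun pq => pq.1 < pq.2 ∧ π pq.2 < π pq.1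

def invCount (n : ℕ) (π : Perm ℕ) : ℕ := (invSet n π).card

section Inversions

variable {n i : ℕ} {π : Perm ℕ}

lemma invCount_one : invCount n 1 = 0 := by
  simp only [invCount, Finset.card_eq_zero, invSet, Finset.filter_eq_empty_iff]
  simp only [Perm.one_apply]
  omega

lemma invSet_adjSwap_mul (hπ : SupportedIn n π) (h₁ : 1 ≤ i) (h₂ : i + 1 ≤ n)
    (hasc : π⁻¹ i < π⁻¹ (i + 1)) :
    invSet n (adjSwap i * π) = insert (π⁻¹ i, π⁻¹ (i + 1)) (invSet n π) := by
  have ha := hπ.inv.apply_mem h₁ (by omega)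
  have hb := hπ.inv.apply_mem (by omega : 1 ≤ i + 1) h₂
  have hval (x y : ℕ) : π x = y ↔ x = π⁻¹ y := Perm.eq_inv_iff_eq.symm
  ext ⟨p, q⟩
  simp only [invSet, Finset.mem_insert, Finset.mem_filter, Finset.mem_product, Finset.mem_Icc,
    Prod.mk.injEq, Perm.mul_apply, adjSwap_lt_adjSwap_iff, hval]
  omega

lemma invCount_adjSwap_mul_of_lt (hπ : SupportedIn n π) (h₁ : 1 ≤ i) (h₂ : i + 1 ≤ n)
    (hasc : π⁻¹ i < π⁻¹ (i + 1)) : invCount n (adjSwap i * π) = invCount n π + 1 := by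
  rw [invCount, invCount, invSet_adjSwap_mul hπ h₁ h₂ hasc, Finset.card_insert_of_notMem]
  simp [invSet]

lemma invCount_adjSwap_mul_of_descent (hπ : SupportedIn n π) (h₁ : 1 ≤ i) (h₂ : i + 1 ≤ n)
    (hd : π⁻¹ (i + 1) < π⁻¹ i) : invCount n (adjSwap i * π) + 1 = invCount n π := by
  have hasc : (adjSwap i * π)⁻¹ i < (adjSwap i * π)⁻¹ (i + 1) := by
    rwa [inv_adjSwap_mul_apply, inv_adjSwap_mul_apply, adjSwap_apply_left, adjSwap_apply_right]
  simpa [adjSwap_mul_adjSwap_mul] using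
    (invCount_adjSwap_mul_of_lt (hπ.adjSwap_mul h₁ h₂) h₁ h₂ hasc).symm

lemma invCount_wordProd_le {L : List ℕ} (hL : ∀ m ∈ L, m ∈ Finset.Icc 1 (n - 1)) :
    invCount n (wordProd L) ≤ L.length := by
  induction L with
  | nil => simp [wordProd, invCount_one]
  | cons i L ih =>
    rw [List.forall_mem_cons, Finset.mem_Icc] at hL
    have hσ := supportedIn_wordProd hL.2
    have := ih hL.2
    rw [wordProd_cons, List.length_cons]
    rcases lt_or_gt_of_ne ((wordProd L)⁻¹.injective.ne (by omega : i ≠ i + 1)) with h | h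
    · have := invCount_adjSwap_mul_of_lt hσ hL.1.1 (by omega) h
      omega
    · have := invCount_adjSwap_mul_of_descent hσ hL.1.1 (by omega) h
      omega

lemma descent_of_length_cons_eq {L : List ℕ} (hL : ∀ m ∈ i :: L, m ∈ Finset.Icc 1 (n - 1))
    (hlen : (i :: L).length = invCount n (wordProd (i :: L))) :
    (wordProd (i :: L))⁻¹ (i + 1) < (wordProd (i :: L))⁻¹ i ∧
      L.length = invCount n (wordProd L) := by
  rw [List.forall_mem_cons, Finset.mem_Icc] at hL
  have hσ := supportedIn_wordProd hL.2
  have hle := invCount_wordProd_le hL.2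
  rw [wordProd_cons, List.length_cons] at *
  rcases lt_or_gt_of_ne ((wordProd L)⁻¹.injective.ne (by omega : i ≠ i + 1)) with h | h
  · have := invCount_adjSwap_mul_of_lt hσ hL.1.1 (by omega) h
    refine ⟨?_, by omega⟩
    rwa [inv_adjSwap_mul_apply, inv_adjSwap_mul_apply, adjSwap_apply_left, adjSwap_apply_right]
  · have := invCount_adjSwap_mul_of_descent hσ hL.1.1 (by omega) h
    omega

end Inversions

section InitialSegments

variable {π : Perm ℕ} {i m : ℕ}

lemma mapsTo_adjSwap_mul (h : i + 1 ≠ m) (hπ : MapsTo π (Iio m) (Iio m)) :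
    MapsTo (adjSwap i * π) (Iio m) (Iio m) := fun x hx => by
  have := hπ hx
  simp only [mem_Iio, Perm.mul_apply, adjSwap_apply] at this ⊢
  split_ifs <;> omega

lemma not_descent_of_mapsTo (hπ : MapsTo π (Iio (i + 1)) (Iio (i + 1))) :
    ¬π⁻¹ (i + 1) < π⁻¹ i := by
  have hi : π⁻¹ i < i + 1 := π.perm_symm_mapsTo_of_mapsTo hπ (mem_Iio.2 (Nat.lt_succ_self i))
  have hi₁ : ¬π⁻¹ (i + 1) < i + 1 := fun h => by simpa using hπ (mem_Iio.2 h)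
  omega

lemma exists_le_apply_lt_of_not_mapsTo (h : ¬MapsTo π (Iio m) (Iio m)) :
    ∃ y, m ≤ y ∧ π y < m := by
  rw [← Perm.perm_symm_mapsTo_iff_mapsTo] at h
  simp only [MapsTo, mem_Iio, not_forall, not_lt] at h
  obtain ⟨x, hx, hy⟩ := h
  exact ⟨π.symm x, hy, by simpa using hx⟩

end InitialSegments

def AvoidsJKI (n j : ℕ) (π : Perm ℕ) : Prop :=
  ¬∃ p q r : ℕ, 1 ≤ p ∧ p < q ∧ q < r ∧ r ≤ n ∧ π p = j ∧ j < π q ∧ π r < j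

def AvoidsKIJ (n j : ℕ) (π : Perm ℕ) : Prop :=
  ¬∃ p q r : ℕ, 1 ≤ p ∧ p < q ∧ q < r ∧ r ≤ n ∧ j < π p ∧ π q < j ∧ π r = j

section Patterns

variable {n i j : ℕ} {π σ : Perm ℕ}

lemma avoidsJKI_one : AvoidsJKI n j 1 := by
  simp only [AvoidsJKI, Perm.one_apply]
  omega

lemma avoidsKIJ_one : AvoidsKIJ n j 1 := by
  simp only [AvoidsKIJ, Perm.one_apply]
  omega

lemma avoidsJKI_adjSwap_mul_iff (h₁ : i ≠ j) (h₂ : i + 1 ≠ j) :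
    AvoidsJKI n j (adjSwap i * π) ↔ AvoidsJKI n j π := by
  simp only [AvoidsJKI, Perm.mul_apply, adjSwap_apply_eq_iff h₁ h₂, lt_adjSwap_apply_iff h₁,
    adjSwap_apply_lt_iff h₂]

lemma avoidsKIJ_adjSwap_mul_iff (h₁ : i ≠ j) (h₂ : i + 1 ≠ j) :
    AvoidsKIJ n j (adjSwap i * π) ↔ AvoidsKIJ n j π := by
  simp only [AvoidsKIJ, Perm.mul_apply, adjSwap_apply_eq_iff h₁ h₂, lt_adjSwap_apply_iff h₁,
    adjSwap_apply_lt_iff h₂]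

lemma avoidsJKI_adjSwap_mul_iff_of_descent (hd : π⁻¹ (j + 1) < π⁻¹ j) :
    AvoidsJKI n (j + 1) (adjSwap j * π) ↔ AvoidsJKI n j π := by
  refine not_congr (exists_congr fun p => exists_congr fun q => exists_congr fun r => ?_)
  -- Only the positions of `j` and `j + 1` matter, and `hd` puts `j + 1` left of `j`.
  have := π.eq_inv_iff_eq (x := p) (y := j)
  have := π.eq_inv_iff_eq (x := q) (y := j + 1)
  have := π.eq_inv_iff_eq (x := r) (y := j + 1)
  simp only [Perm.mul_apply, adjSwap_apply]
  split_ifs <;> omega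

lemma avoidsKIJ_adjSwap_mul_iff_of_descent (hd : π⁻¹ (j + 1) < π⁻¹ j) :
    AvoidsKIJ n j (adjSwap j * π) ↔ AvoidsKIJ n (j + 1) π := by
  refine not_congr (exists_congr fun p => exists_congr fun q => exists_congr fun r => ?_)
  have := π.eq_inv_iff_eq (x := p) (y := j)
  have := π.eq_inv_iff_eq (x := q) (y := j)
  have := π.eq_inv_iff_eq (x := r) (y := j + 1)
  simp only [Perm.mul_apply, adjSwap_apply]
  split_ifs <;> omega

lemma avoidsJKI_adjSwap_mul_of_mapsTo (hσ : MapsTo σ (Iio (i + 2)) (Iio (i + 2))) :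
    AvoidsJKI n (i + 1) (adjSwap i * σ) := by
  rintro ⟨p, q, r, -, -, hqr, -, -, hq, hr⟩
  simp only [Perm.mul_apply, adjSwap_apply] at hq hr
  have hq' : i + 2 ≤ q := by
    by_contra h
    have := hσ (mem_Iio.2 (not_le.1 h))
    simp only [mem_Iio] at this
    split_ifs at hq <;> omega
  have hr' : r < i + 2 := by
    have := σ.perm_symm_mapsTo_of_mapsTo hσ (mem_Iio.2 (show σ r < i + 2 by split_ifs at hr <;> omega))
    simpa using this
  omega

lemma avoidsKIJ_adjSwap_mul_of_mapsTo (hσ : MapsTo σ (Iio i) (Iio i)) :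
    AvoidsKIJ n i (adjSwap i * σ) := by
  rintro ⟨p, q, r, -, hpq, -, -, hp, hq, -⟩
  simp only [Perm.mul_apply, adjSwap_apply] at hp hq
  have hp' : i ≤ p := by
    by_contra h
    have := hσ (mem_Iio.2 (not_le.1 h))
    simp only [mem_Iio] at this
    split_ifs at hp <;> omega
  have hq' : q < i := by
    have := σ.perm_symm_mapsTo_of_mapsTo hσ (mem_Iio.2 (show σ q < i by split_ifs at hq <;> omega))
    simpa using this
  omega

end Patterns

-- The condition on the permutation still to be sorted under which the automaton, now in state `s`,
-- accepts one of its reduced words. An ill state forbids one letter from then on (`s_m` for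
-- `𝕌`, `s_{m-1}` for `𝔻`), which amounts to stabilising an initial segment.
def UViable (n : ℕ) (π : Perm ℕ) : AState → Prop
  | .healthy j => AvoidsJKI n j π
  | .ill m => MapsTo π (Iio (m + 1)) (Iio (m + 1))
  | .dead => False

def DViable (n : ℕ) (π : Perm ℕ) : AState → Prop
  | .healthy j => AvoidsKIJ n j π
  | .ill m => MapsTo π (Iio m) (Iio m)
  | .dead => False

section Viability

variable {n i : ℕ} {π : Perm ℕ} {s : AState}

lemma UViable.ne_dead (h : UViable n π s) : s ≠ .dead := by
  rintro rfl; exact h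

lemma DViable.ne_dead (h : DViable n π s) : s ≠ .dead := by
  rintro rfl; exact h

lemma uViable_one (hs : s ≠ .dead) : UViable n 1 s := by
  cases s with
  | healthy j => exact avoidsJKI_one
  | ill m => exact mapsTo_id _
  | dead => exact hs rfl

lemma dViable_one (hs : s ≠ .dead) : DViable n 1 s := by
  cases s with
  | healthy j => exact avoidsKIJ_one
  | ill m => exact mapsTo_id _
  | dead => exact hs rfl

lemma uViable_of_Ustep (hd : π⁻¹ (i + 1) < π⁻¹ i)
    (h : UViable n (adjSwap i * π) (Ustep s i)) : UViable n π s := by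
  cases s with
  | healthy j =>
    simp only [Ustep] at h
    split_ifs at h with h₁ h₂
    · subst h₁; exact (avoidsJKI_adjSwap_mul_iff_of_descent hd).1 h
    · subst h₂
      show AvoidsJKI n (i + 1) π
      simpa only [adjSwap_mul_adjSwap_mul] using avoidsJKI_adjSwap_mul_of_mapsTo (n := n) h
    · exact (avoidsJKI_adjSwap_mul_iff h₁ h₂).1 h
  | ill m =>
    simp only [Ustep] at h
    split_ifs at h with h₁
    · exact h.elim
    · show MapsTo π (Iio (m + 1)) (Iio (m + 1))
      simpa only [adjSwap_mul_adjSwap_mul] using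
        mapsTo_adjSwap_mul (show i + 1 ≠ m + 1 by omega) h
  | dead => exact h

lemma dViable_of_Dstep (hd : π⁻¹ (i + 1) < π⁻¹ i)
    (h : DViable n (adjSwap i * π) (Dstep s i)) : DViable n π s := by
  cases s with
  | healthy j =>
    simp only [Dstep] at h
    split_ifs at h with h₁ h₂
    · subst h₁; exact (avoidsKIJ_adjSwap_mul_iff_of_descent hd).1 h
    · subst h₂
      show AvoidsKIJ n i π
      simpa only [adjSwap_mul_adjSwap_mul] using avoidsKIJ_adjSwap_mul_of_mapsTo (n := n) h
    · exact (avoidsKIJ_adjSwap_mul_iff h₂ h₁).1 h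
  | ill m =>
    simp only [Dstep] at h
    split_ifs at h with h₁
    · exact h.elim
    · show MapsTo π (Iio m) (Iio m)
      simpa only [adjSwap_mul_adjSwap_mul] using mapsTo_adjSwap_mul h₁ h
  | dead => exact h

lemma uViable_Ustep (hd : π⁻¹ (i + 1) < π⁻¹ i) (h : UViable n π s)
    (hgood : s = .healthy (i + 1) → MapsTo π (Iio (i + 2)) (Iio (i + 2))) :
    UViable n (adjSwap i * π) (Ustep s i) := by
  cases s with
  | healthy j =>
    simp only [Ustep]
    split_ifs with h₁ h₂
    · subst h₁; exact (avoidsJKI_adjSwap_mul_iff_of_descent hd).2 h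
    · subst h₂; exact mapsTo_adjSwap_mul (by omega) (hgood rfl)
    · exact (avoidsJKI_adjSwap_mul_iff h₁ h₂).2 h
  | ill m =>
    simp only [Ustep]
    split_ifs with h₁
    · subst h₁; exact not_descent_of_mapsTo h hd
    · exact mapsTo_adjSwap_mul (by omega) h
  | dead => exact h

lemma dViable_Dstep (hd : π⁻¹ (i + 1) < π⁻¹ i) (h : DViable n π s)
    (hgood : s = .healthy i → MapsTo π (Iio i) (Iio i)) :
    DViable n (adjSwap i * π) (Dstep s i) := by
  cases s with
  | healthy j =>
    simp only [Dstep]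
    split_ifs with h₁ h₂
    · subst h₁; exact (avoidsKIJ_adjSwap_mul_iff_of_descent hd).2 h
    · subst h₂; exact mapsTo_adjSwap_mul (by omega) (hgood rfl)
    · exact (avoidsKIJ_adjSwap_mul_iff h₂ h₁).2 h
  | ill m =>
    simp only [Dstep]
    split_ifs with h₁
    · subst h₁; exact not_descent_of_mapsTo h hd
    · exact mapsTo_adjSwap_mul h₁ h
  | dead => exact h

lemma uViable_of_foldl_ne_dead {L : List ℕ} (hL : ∀ m ∈ L, m ∈ Finset.Icc 1 (n - 1))
    (hlen : L.length = invCount n (wordProd L)) (h : L.foldl Ustep s ≠ .dead) :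
    UViable n (wordProd L) s := by
  induction L generalizing s with
  | nil => exact uViable_one h
  | cons i L ih =>
    obtain ⟨hd, hlen'⟩ := descent_of_length_cons_eq hL hlen
    refine uViable_of_Ustep hd ?_
    rw [wordProd_cons, adjSwap_mul_adjSwap_mul]
    exact ih (fun m hm => hL m (List.mem_cons_of_mem i hm)) hlen' h

lemma dViable_of_foldl_ne_dead {L : List ℕ} (hL : ∀ m ∈ L, m ∈ Finset.Icc 1 (n - 1))
    (hlen : L.length = invCount n (wordProd L)) (h : L.foldl Dstep s ≠ .dead) :
    DViable n (wordProd L) s := by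
  induction L generalizing s with
  | nil => exact dViable_one h
  | cons i L ih =>
    obtain ⟨hd, hlen'⟩ := descent_of_length_cons_eq hL hlen
    refine dViable_of_Dstep hd ?_
    rw [wordProd_cons, adjSwap_mul_adjSwap_mul]
    exact ih (fun m hm => hL m (List.mem_cons_of_mem i hm)) hlen' h

lemma Ustep_eq_healthy {s : AState} {i m : ℕ} (h : Ustep s i = .healthy m) :
    s = .healthy m ∧ i ≠ m ∧ i + 1 ≠ m ∨ s = .healthy i ∧ m = i + 1 := by
  cases s <;> simp only [Ustep] at h <;> (try split_ifs at h) <;> simp_all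

lemma Dstep_eq_healthy {s : AState} {i m : ℕ} (h : Dstep s i = .healthy m) :
    s = .healthy m ∧ i + 1 ≠ m ∧ i ≠ m ∨ s = .healthy (i + 1) ∧ m = i := by
  cases s <;> simp only [Dstep] at h <;> (try split_ifs at h) <;> simp_all

end Viability

lemma exists_max_lt {P : ℕ → Prop} {s d : ℕ} (hsd : s < d) (hs : P s) :
    ∃ t < d, P t ∧ ∀ k, t < k → k < d → ¬P k := by
  classical
  have := Nat.findGreatest_le (P := P) (d - 1)
  exact ⟨Nat.findGreatest P (d - 1), by omega, Nat.findGreatest_spec (by omega) hs,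
    fun k hk hkd => Nat.findGreatest_is_greatest hk (by omega)⟩

section CompatibleDescent

variable {n : ℕ} {π : Perm ℕ}

lemma exists_lt_inv_apply_of_not_mapsTo {j : ℕ} (hπ : SupportedIn n π) (hj : AvoidsJKI n j π)
    (h : ¬MapsTo π (Iio (j + 1)) (Iio (j + 1))) : ∃ x, 1 ≤ x ∧ x < π⁻¹ j ∧ j < π x := by
  obtain ⟨x, hx, hjx⟩ : ∃ x, x ≤ j ∧ j < π x := by
    simpa [MapsTo, Nat.lt_succ_iff] using h
  obtain ⟨y, hy, hyj⟩ := exists_le_apply_lt_of_not_mapsTo h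
  obtain ⟨hx₁, hxn⟩ := hπ.mem_of_apply_ne (x := x) (by omega)
  have hyn := (hπ.mem_of_apply_ne (x := y) (by omega)).2
  have hjn := (hπ.apply_mem hx₁ hxn).2
  have hj₁ := (hπ.inv.apply_mem (x := j) (by omega) (by omega)).1
  have := π.eq_inv_iff_eq (x := x) (y := j)
  have := π.eq_inv_iff_eq (x := y) (y := j)
  refine ⟨x, hx₁, not_le.1 fun hjx' => hj ⟨π⁻¹ j, x, y, hj₁, by omega, by omega, hyn, by simp,
    hjx, by omega⟩, hjx⟩

lemma exists_descent_ge_of_not_mapsTo {j : ℕ} (hπ : SupportedIn n π) (hj : AvoidsJKI n j π)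
    (h : ¬MapsTo π (Iio (j + 1)) (Iio (j + 1))) : ∃ t, j ≤ t ∧ π⁻¹ (t + 1) < π⁻¹ t := by
  obtain ⟨x, -, hx, hjx⟩ := exists_lt_inv_apply_of_not_mapsTo hπ hj h
  obtain ⟨t, ht, -, hd⟩ := exists_descent_of_inv_apply_lt (π := π) hjx.le (by simpa using hx)
  exact ⟨t, ht, hd⟩

lemma exists_descent_lt_of_not_mapsTo {j : ℕ} (hπ : SupportedIn n π) (hj : AvoidsKIJ n j π)
    (h : ¬MapsTo π (Iio j) (Iio j)) : ∃ t < j, π⁻¹ (t + 1) < π⁻¹ t := by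
  obtain ⟨x, hx, hjx⟩ : ∃ x < j, j ≤ π x := by simpa [MapsTo] using h
  obtain ⟨y, hy, hyj⟩ := exists_le_apply_lt_of_not_mapsTo h
  by_cases hjy : π⁻¹ j < y
  · obtain ⟨t, -, ht, hd⟩ := exists_descent_of_inv_apply_lt (π := π) hyj.le (by simpa using hjy)
    exact ⟨t, ht, hd⟩
  have := π.eq_inv_iff_eq (x := x) (y := j)
  have := π.eq_inv_iff_eq (x := y) (y := j)
  have hx₁ := (hπ.mem_of_apply_ne (x := x) (by omega)).1
  have hjn := (hπ.mem_of_apply_ne (x := π⁻¹ j) ((π.apply_symm_apply j).trans_ne (by omega))).2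
  exact absurd ⟨x, y, π⁻¹ j, hx₁, by omega, by omega, hjn, by omega, hyj, by simp⟩ hj

lemma mapsTo_of_forall_not_descent {u d : ℕ} (hπ : SupportedIn n π) (hu : AvoidsJKI n u π)
    (hd : AvoidsKIJ n d π) (hud : u < d) (hdn : d ≤ n)
    (hgap : ∀ t, u ≤ t → t < d → ¬π⁻¹ (t + 1) < π⁻¹ t) :
    MapsTo π (Iio (u + 1)) (Iio (u + 1)) := by
  by_contra h
  obtain ⟨x, hx₁, hx, hux⟩ := exists_lt_inv_apply_of_not_mapsTo hπ hu h
  have hud' : π⁻¹ u < π⁻¹ d := by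
    refine lt_of_le_of_ne (not_lt.1 fun h' => ?_) (π⁻¹.injective.ne hud.ne)
    obtain ⟨t, ht₁, ht₂, ht⟩ := exists_descent_of_inv_apply_lt hud.le h'
    exact hgap t ht₁ ht₂ ht
  have hdx : d < π x := not_le.1 fun h' => by
    obtain ⟨t, ht₁, ht₂, ht⟩ := exists_descent_of_inv_apply_lt (π := π) hux.le (by simpa using hx)
    exact hgap t ht₁ (by omega) ht
  exact hd ⟨x, π⁻¹ u, π⁻¹ d, hx₁, hx, hud', (hπ.inv.apply_mem (by omega) hdn).2, hdx,
    by simpa using hud, by simp⟩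

variable {UH DH : Set ℕ}

lemma exists_compatible_descent_of_blocked (hπ : SupportedIn n π) (hUD : Disjoint UH DH)
    (hU : ∀ j ∈ UH, AvoidsJKI n j π) (hD : ∀ j ∈ DH, AvoidsKIJ n j π) {d : ℕ}
    (hd : π⁻¹ (d + 1) < π⁻¹ d) (hdD : d ∈ DH) (hblock : ¬MapsTo π (Iio d) (Iio d)) :
    ∃ i, π⁻¹ (i + 1) < π⁻¹ i ∧ (i + 1 ∈ UH → MapsTo π (Iio (i + 2)) (Iio (i + 2))) ∧
      (i ∈ DH → MapsTo π (Iio i) (Iio i)) := by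
  induction d using Nat.strong_induction_on with
  | _ d ih =>
  obtain ⟨s, hs, hsd⟩ := exists_descent_lt_of_not_mapsTo hπ (hD d hdD) hblock
  obtain ⟨t, htd, ht, hmax⟩ := exists_max_lt (P := fun t => π⁻¹ (t + 1) < π⁻¹ t) hs hsd
  by_cases htD : t ∈ DH ∧ ¬MapsTo π (Iio t) (Iio t)
  · exact ih t htd ht htD.1 htD.2
  simp only [not_and, not_not] at htD
  refine ⟨t, ht, fun htU => ?_, htD⟩
  have hne : t + 1 ≠ d := hUD.ne_of_mem htU hdD
  exact mapsTo_of_forall_not_descent hπ (hU _ htU) (hD d hdD) (by omega)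
    (by have := (hπ.descent_bounds hd).2; omega) fun k hk hkd => hmax k (by omega) hkd

lemma exists_compatible_descent (hπ : SupportedIn n π) (hπ₁ : π ≠ 1) (hUD : Disjoint UH DH)
    (hU : ∀ j ∈ UH, AvoidsJKI n j π) (hD : ∀ j ∈ DH, AvoidsKIJ n j π) :
    ∃ i, π⁻¹ (i + 1) < π⁻¹ i ∧ (i + 1 ∈ UH → MapsTo π (Iio (i + 2)) (Iio (i + 2))) ∧
      (i ∈ DH → MapsTo π (Iio i) (Iio i)) := by
  obtain ⟨s, hs⟩ := exists_descent_of_ne_one hπ₁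
  obtain ⟨t, -, ht, hmax⟩ :=
    exists_max_lt (P := fun t => π⁻¹ (t + 1) < π⁻¹ t) (d := n) (by have := (hπ.descent_bounds hs).2; omega) hs
  by_cases htD : t ∈ DH ∧ ¬MapsTo π (Iio t) (Iio t)
  · exact exists_compatible_descent_of_blocked hπ hUD hU hD ht htD.1 htD.2
  simp only [not_and, not_not] at htD
  refine ⟨t, ht, fun htU => by_contra fun hblock => ?_, htD⟩
  obtain ⟨k, hk, hkd⟩ := exists_descent_ge_of_not_mapsTo hπ (hU _ htU) hblock
  exact hmax k (by omega) (by have := (hπ.descent_bounds hkd).2; omega) hkd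

end CompatibleDescent

lemma disjoint_preimage_healthy_step {SU SD : Set AState} {i : ℕ}
    (h : Disjoint (AState.healthy ⁻¹' SU) (AState.healthy ⁻¹' SD)) :
    Disjoint (AState.healthy ⁻¹' ((Ustep · i) '' SU))
      (AState.healthy ⁻¹' ((Dstep · i) '' SD)) := by
  refine Set.disjoint_left.2 fun m ⟨s, hs, hsm⟩ ⟨s', hs', hs'm⟩ => ?_
  rcases Ustep_eq_healthy hsm with ⟨rfl, hi, -⟩ | ⟨rfl, rfl⟩ <;>
    rcases Dstep_eq_healthy hs'm with ⟨rfl, hi', -⟩ | ⟨rfl, hm⟩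
  · exact Set.disjoint_left.1 h hs hs'
  all_goals omega

lemma exists_reduced_word_accepted {n : ℕ} {π : Perm ℕ} (hπ : SupportedIn n π)
    (SU SD : Set AState) (hdisj : Disjoint (AState.healthy ⁻¹' SU) (AState.healthy ⁻¹' SD))
    (hU : ∀ s ∈ SU, UViable n π s) (hD : ∀ s ∈ SD, DViable n π s) :
    ∃ L : List ℕ, (∀ m ∈ L, m ∈ Finset.Icc 1 (n - 1)) ∧ wordProd L = π ∧
      L.length = invCount n π ∧
      (∀ s ∈ SU, L.foldl Ustep s ≠ .dead) ∧ (∀ s ∈ SD, L.foldl Dstep s ≠ .dead) := by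
  induction hk : invCount n π using Nat.strong_induction_on generalizing π SU SD with
  | _ k ih =>
  by_cases hπ₁ : π = 1
  · subst hπ₁
    exact ⟨[], by simp, rfl, by simp [← hk, invCount_one], fun s hs => (hU s hs).ne_dead,
      fun s hs => (hD s hs).ne_dead⟩
  obtain ⟨i, hd, hgU, hgD⟩ := exists_compatible_descent hπ hπ₁ hdisj
    (fun j hj => hU _ hj) (fun j hj => hD _ hj)
  obtain ⟨hi₁, hin⟩ := hπ.descent_bounds hd
  have hcount := invCount_adjSwap_mul_of_descent hπ hi₁ hin hd
  obtain ⟨L, hL, hprod, hlen, hLU, hLD⟩ := ih _ (by omega) (hπ.adjSwap_mul hi₁ hin)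
    ((Ustep · i) '' SU) ((Dstep · i) '' SD) (disjoint_preimage_healthy_step hdisj)
    (Set.forall_mem_image.2 fun s hs => uViable_Ustep hd (hU s hs) (by rintro rfl; exact hgU hs))
    (Set.forall_mem_image.2 fun s hs => dViable_Dstep hd (hD s hs) (by rintro rfl; exact hgD hs))
    rfl
  refine ⟨i :: L, ?_, by rw [wordProd_cons, hprod, adjSwap_mul_adjSwap_mul],
    by simp only [List.length_cons]; omega, fun s hs => hLU _ (Set.mem_image_of_mem _ hs),
    fun s hs => hLD _ (Set.mem_image_of_mem _ hs)⟩
  rw [List.forall_mem_cons, Finset.mem_Icc]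
  exact ⟨⟨hi₁, by omega⟩, hL⟩

lemma isRWord_iff {n : ℕ} {π : Perm ℕ} {L : List ℕ} (hπ : SupportedIn n π) :
    IsRWord n π L ↔
      (∀ m ∈ L, m ∈ Finset.Icc 1 (n - 1)) ∧ wordProd L = π ∧ L.length = invCount n π := by
  refine ⟨fun ⟨hL, hprod, hmin⟩ => ⟨hL, hprod, le_antisymm ?_ (hprod ▸ invCount_wordProd_le hL)⟩,
    fun ⟨hL, hprod, hlen⟩ => ⟨hL, hprod, fun L' hL' hprod' => ?_⟩⟩
  · obtain ⟨L₀, hL₀, hprod₀, hlen₀, -⟩ :=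
      exists_reduced_word_accepted hπ ∅ ∅ (by simp) (by simp) (by simp)
    exact hlen₀ ▸ hmin L₀ hL₀ hprod₀
  · exact hlen ▸ hprod' ▸ invCount_wordProd_le hL'

theorem permutree_automata_product_general (n : ℕ) (U D : Finset ℕ)
    (hUD : Disjoint U D)
    (π : Equiv.Perm ℕ) (hπ : ∀ x : ℕ, x ∉ Finset.Icc 1 n → π x = x) :
    (∃ L : List ℕ, IsRWord n π L ∧
        (∀ j ∈ U, Urun j L ≠ AState.dead) ∧ (∀ j ∈ D, Drun j L ≠ AState.dead)) ↔
      ((∀ j ∈ U, ¬∃ p q r : ℕ, 1 ≤ p ∧ p < q ∧ q < r ∧ r ≤ n ∧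
          π p = j ∧ j < π q ∧ π r < j) ∧
       (∀ j ∈ D, ¬∃ p q r : ℕ, 1 ≤ p ∧ p < q ∧ q < r ∧ r ≤ n ∧
          j < π p ∧ π q < j ∧ π r = j)) := by
  refine ⟨fun ⟨L, hL, hLU, hLD⟩ => ?_, fun ⟨hAU, hAD⟩ => ?_⟩
  · obtain ⟨hw, rfl, hlen⟩ := (isRWord_iff hπ).1 hL
    exact ⟨fun j hj => uViable_of_foldl_ne_dead hw hlen (hLU j hj),
      fun j hj => dViable_of_foldl_ne_dead hw hlen (hLD j hj)⟩
  · have hinj : Function.Injective AState.healthy := fun _ _ => AState.healthy.inj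
    obtain ⟨L, hL, hprod, hlen, hLU, hLD⟩ := exists_reduced_word_accepted hπ
      (AState.healthy '' U) (AState.healthy '' D)
      (by rwa [Set.preimage_image_eq _ hinj, Set.preimage_image_eq _ hinj, Finset.disjoint_coe])
      (Set.forall_mem_image.2 hAU) (Set.forall_mem_image.2 hAD)
    exact ⟨L, (isRWord_iff hπ).2 ⟨hL, hprod, hlen⟩,
      fun j hj => hLU _ (Set.mem_image_of_mem _ hj), fun j hj => hLD _ (Set.mem_image_of_mem _ hj)⟩

/-- Let `U, D` be disjoint subsets of `[2, n-1]` and `π ∈ S_n`.  Then `π` has a single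
reduced word simultaneously accepted by all automata `𝕌(j)` for `j ∈ U` and `𝔻(j)` for
`j ∈ D` if and only if `π` avoids the patterns `jki` for all `j ∈ U` and `kij` for all
`j ∈ D` (with `i < j < k`). -/
theorem permutree_automata_product (n : ℕ) (U D : Finset ℕ)
    (hU : ∀ j ∈ U, 2 ≤ j ∧ j ≤ n - 1) (hD : ∀ j ∈ D, 2 ≤ j ∧ j ≤ n - 1)
    (hUD : Disjoint U D)
    (π : Equiv.Perm ℕ) (hπ : ∀ x : ℕ, x ∉ Finset.Icc 1 n → π x = x) :
    (∃ L : List ℕ, IsRWord n π L ∧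
        (∀ j ∈ U, Urun j L ≠ AState.dead) ∧ (∀ j ∈ D, Drun j L ≠ AState.dead)) ↔
      ((∀ j ∈ U, ¬∃ p q r : ℕ, 1 ≤ p ∧ p < q ∧ q < r ∧ r ≤ n ∧
          π p = j ∧ j < π q ∧ π r < j) ∧
       (∀ j ∈ D, ¬∃ p q r : ℕ, 1 ≤ p ∧ p < q ∧ q < r ∧ r ≤ n ∧
          j < π p ∧ π q < j ∧ π r = j)) :=
  permutree_automata_product_general n U D hUD π hπ
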